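/- arXiv:0811.0898 — 2 statements merged into one kernel-verified Lean document; each statement's English description precedes it below -/
import Mathlib

section
/- Let A ⊆ (Z_2)^N be an affine subspace, l : (Z_2)^N → Z_2 linear, and q : (Z_2)^N → Z_2 quadratic. Consider the state |ψ⟩ ∝ Σ_{x∈A} i^{l(x)} (-1)^{q(x)} |x⟩. Then applying the single-qubit PHASE gate P = diag(1, i) to the first qubit yields a state of the same form: there exist a linear l' and quadratic q' on (Z_2)^N such that P_1|ψ⟩ ∝ Σ_{x∈A} i^{l'(x)} (-1)^{q'(x)} |x⟩. Specifically one may take l'(x) = l(x) + x_1 (mod 2) and q'(x) = q(x) + l(x)·x_1 (mod 2). -/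
/-- A linear function on `(Z_2)^K`. -/
def IsLinear {K : ℕ} (l : (Fin K → ZMod 2) → ZMod 2) : Prop :=
  ∃ d : Fin K → ZMod 2, ∀ x, l x = ∑ i, d i * x i

/-- A quadratic function on `(Z_2)^K`. -/
def IsQuadratic {K : ℕ} (q : (Fin K → ZMod 2) → ZMod 2) : Prop :=
  ∃ (c : Fin K → Fin K → ZMod 2) (d : Fin K → ZMod 2),
    ∀ x, q x = (∑ i, ∑ j, c i j * x i * x j) + ∑ i, d i * x i

/-
Pointwise, `P_1` multiplies the amplitude `i^{l(x)} (-1)^{q(x)}` by `i^{x_1}`, and for `a b ∈ Z_2`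
lifted to `{0, 1}` one has `i^a i^b = i^{a+b mod 2} (-1)^{ab}`: the carry of `a + b` is `ab`.
So the new amplitude is `i^{l(x)+x_1} (-1)^{q(x)+l(x)x_1}`, with no change of normalisation.
The phase `l(x) x_1` is a product of two linear forms, hence quadratic.
-/

namespace IsLinear

variable {K : ℕ}

theorem add {l m : (Fin K → ZMod 2) → ZMod 2} (hl : IsLinear l) (hm : IsLinear m) :
    IsLinear fun x => l x + m x := by
  obtain ⟨d, hd⟩ := hl
  obtain ⟨e, he⟩ := hm
  exact ⟨d + e, fun x => by simp only [hd, he, Pi.add_apply, add_mul, Finset.sum_add_distrib]⟩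

theorem apply (k : Fin K) : IsLinear fun x : Fin K → ZMod 2 => x k :=
  ⟨Pi.single k 1, fun x => by simp [Pi.single_apply]⟩

theorem mul {l m : (Fin K → ZMod 2) → ZMod 2} (hl : IsLinear l) (hm : IsLinear m) :
    IsQuadratic fun x => l x * m x := by
  obtain ⟨d, hd⟩ := hl
  obtain ⟨e, he⟩ := hm
  refine ⟨fun i j => d i * e j, 0, fun x => ?_⟩
  simp only [hd, he, Finset.sum_mul_sum, Pi.zero_apply, zero_mul, Finset.sum_const_zero, add_zero]
  exact Finset.sum_congr rfl fun i _ => Finset.sum_congr rfl fun j _ => by ring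

end IsLinear

theorem IsQuadratic.add {K : ℕ} {q r : (Fin K → ZMod 2) → ZMod 2} (hq : IsQuadratic q)
    (hr : IsQuadratic r) : IsQuadratic fun x => q x + r x := by
  obtain ⟨c, d, hcd⟩ := hq
  obtain ⟨c', d', hcd'⟩ := hr
  refine ⟨c + c', d + d', fun x => ?_⟩
  simp only [hcd, hcd', Pi.add_apply, add_mul, Finset.sum_add_distrib]
  ring

theorem ZMod.eq_zero_or_eq_one (a : ZMod 2) : a = 0 ∨ a = 1 := by
  revert a
  decide

theorem I_pow_val_mul_I_pow_val (a b : ZMod 2) :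
    Complex.I ^ a.val * Complex.I ^ b.val =
      Complex.I ^ (a + b).val * (-1 : ℂ) ^ (a * b).val := by
  rcases a.eq_zero_or_eq_one with rfl | rfl <;> rcases b.eq_zero_or_eq_one with rfl | rfl <;>
    norm_num [ZMod.val_one, ZMod.val_ofNat, pow_two]

theorem neg_one_pow_val_add (a b : ZMod 2) :
    (-1 : ℂ) ^ (a + b).val = (-1 : ℂ) ^ a.val * (-1 : ℂ) ^ b.val := by
  rcases a.eq_zero_or_eq_one with rfl | rfl <;> rcases b.eq_zero_or_eq_one with rfl | rfl <;>
    norm_num [ZMod.val_one, ZMod.val_ofNat]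

theorem I_pow_val_mul_I_pow_val_mul_neg_one_pow_val (a b c : ZMod 2) :
    Complex.I ^ b.val * (Complex.I ^ a.val * (-1 : ℂ) ^ c.val) =
      Complex.I ^ (a + b).val * (-1 : ℂ) ^ (c + a * b).val := by
  rw [mul_left_comm, ← mul_assoc, I_pow_val_mul_I_pow_val, neg_one_pow_val_add]
  ring

/-- Applying the PHASE gate `P = diag(1, i)` to the first qubit of
`|ψ⟩ ∝ Σ_{x∈A} i^{l(x)} (-1)^{q(x)} |x⟩` yields a state of the same form,
with `l'(x) = l(x) + x_1` and `q'(x) = q(x) + l(x)·x_1` (mod 2). -/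
theorem phase_gate_preserves_form (N : ℕ)
    (A : Set (Fin (N + 1) → ZMod 2))
    (l q : (Fin (N + 1) → ZMod 2) → ZMod 2)
    (hl : IsLinear l) (hq : IsQuadratic q)
    (ψ : (Fin (N + 1) → ZMod 2) → ℂ)
    (hψ : ψ = A.indicator fun x => Complex.I ^ (l x).val * (-1 : ℂ) ^ (q x).val) :
    ∃ l' q' : (Fin (N + 1) → ZMod 2) → ZMod 2,
      IsLinear l' ∧ IsQuadratic q' ∧
      (∀ x, l' x = l x + x 0) ∧ (∀ x, q' x = q x + l x * x 0) ∧
      ∃ c : ℂ, c ≠ 0 ∧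
        (Matrix.diagonal fun x : Fin (N + 1) → ZMod 2 =>
            Complex.I ^ (x 0).val).mulVec ψ =
          c • A.indicator fun x => Complex.I ^ (l' x).val * (-1 : ℂ) ^ (q' x).val := by
  refine ⟨fun x => l x + x 0, fun x => q x + l x * x 0, hl.add (IsLinear.apply 0),
    hq.add (hl.mul (IsLinear.apply 0)), fun _ => rfl, fun _ => rfl, 1, one_ne_zero, ?_⟩
  funext x
  rw [Matrix.mulVec_diagonal, hψ, one_smul]
  by_cases hx : x ∈ A
  · simp only [Set.indicator_of_mem hx]
    exact I_pow_val_mul_I_pow_val_mul_neg_one_pow_val (l x) (x 0) (q x)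
  · simp only [Set.indicator_of_notMem hx, mul_zero]
end

section
/- Let A = {Ru + t} ⊆ (Z_2)^N be an affine subspace, l linear and q quadratic on (Z_2)^N, and |ψ⟩ ∝ Σ_{x∈A} i^{l(x)} (-1)^{q(x)} |x⟩. Applying a CNOT gate to qubits 1 (control) and 2 (target) yields CNOT_{1,2}|ψ⟩ ∝ Σ_{x∈A'} i^{l'(x)} (-1)^{q'(x)} |x⟩ where A' = L(A) is the image of A under the invertible linear map L : (Z_2)^N → (Z_2)^N sending (x_1, x_2, x_3, ..., x_N) to (x_1, x_1 + x_2, x_3, ..., x_N), l' = l ∘ L^{-1}, and q' = q ∘ L^{-1}. In particular A' is again an affine subspace, l' is linear on A', and q' is quadratic. -/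
/-- The invertible linear map `(x_1, x_2, x_3, ...) ↦ (x_1, x_1 + x_2, x_3, ...)`
on `(Z_2)^{N+2}` implemented by CNOT on qubits 0 (control) and 1 (target);
over `Z_2` it is its own inverse. -/
def Lmap (N : ℕ) : (Fin (N + 2) → ZMod 2) → (Fin (N + 2) → ZMod 2) :=
  fun x => Function.update x 1 (x 0 + x 1)

/-- The CNOT gate on qubits 0 and 1, as a permutation matrix on basis states. -/
def CNOTgate (N : ℕ) :
    Matrix (Fin (N + 2) → ZMod 2) (Fin (N + 2) → ZMod 2) ℂ :=
  Matrix.of fun y z => if y = Lmap N z then 1 else 0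

/-!
CNOT permutes the computational basis by the involution `L : x ↦ (x₁, x₁ + x₂, x₃, …)`, so
`CNOT ψ = ψ ∘ L`. Since `L` is given by the matrix `1 + E₁₀`, the set `L(A)` is the affine
subspace `{(L R) u + L t}` and the composites `l ∘ L`, `q ∘ L` stay linear and quadratic (a
quadratic form `xᵀ C x` becomes `xᵀ (Lᵀ C L) x`). The phase function of `ψ ∘ L` is then
`i^{l ∘ L} (-1)^{q ∘ L}` on `L⁻¹(A) = L(A)`.
-/

open Matrix

section LinearSubstitution

variable {K K' : ℕ}

theorem isQuadratic_iff_dotProduct (q : (Fin K → ZMod 2) → ZMod 2) :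
    IsQuadratic q ↔ ∃ (c : Matrix (Fin K) (Fin K) (ZMod 2)) (d : Fin K → ZMod 2),
      ∀ x, q x = x ⬝ᵥ c *ᵥ x + d ⬝ᵥ x := by
  have hform : ∀ (c : Fin K → Fin K → ZMod 2) (x : Fin K → ZMod 2),
      ∑ i, ∑ j, c i j * x i * x j = x ⬝ᵥ Matrix.of c *ᵥ x := by
    intro c x
    simp only [dotProduct, mulVec, of_apply, Finset.mul_sum]
    exact Finset.sum_congr rfl fun i _ => Finset.sum_congr rfl fun j _ => by ring
  simp only [IsQuadratic, hform]
  exact ⟨fun ⟨c, d, h⟩ => ⟨Matrix.of c, d, h⟩, fun ⟨c, d, h⟩ => ⟨c, d, h⟩⟩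

theorem IsLinear.comp_mulVec {l : (Fin K → ZMod 2) → ZMod 2} (hl : IsLinear l)
    (M : Matrix (Fin K) (Fin K') (ZMod 2)) : IsLinear (l ∘ M.mulVec) := by
  obtain ⟨d, hd⟩ := hl
  exact ⟨d ᵥ* M, fun x => (hd _).trans (dotProduct_mulVec d M x)⟩

theorem IsQuadratic.comp_mulVec {q : (Fin K → ZMod 2) → ZMod 2} (hq : IsQuadratic q)
    (M : Matrix (Fin K) (Fin K') (ZMod 2)) : IsQuadratic (q ∘ M.mulVec) := by
  obtain ⟨c, d, hcd⟩ := (isQuadratic_iff_dotProduct q).mp hq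
  refine (isQuadratic_iff_dotProduct _).mpr ⟨Mᵀ * c * M, d ᵥ* M, fun x => ?_⟩
  rw [Function.comp_apply, hcd, dotProduct_mulVec d, mulVec_mulVec x c M,
    ← vecMul_transpose M x, ← dotProduct_mulVec x Mᵀ, mulVec_mulVec, Matrix.mul_assoc]

end LinearSubstitution

theorem image_mulVec_affineSubspace {R : Type*} [NonUnitalSemiring R] {n p m : Type*}
    [Fintype n] [Fintype m] (M : Matrix p n R) (B : Matrix n m R) (t : n → R) :
    M.mulVec '' {x | ∃ u, x = B *ᵥ u + t} = {x | ∃ u, x = (M * B) *ᵥ u + M *ᵥ t} := by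
  ext y
  simp only [Set.mem_image, Set.mem_ofPred_eq]
  constructor
  · rintro ⟨x, ⟨u, rfl⟩, rfl⟩
    exact ⟨u, by rw [mulVec_add, mulVec_mulVec]⟩
  · rintro ⟨u, rfl⟩
    exact ⟨B *ᵥ u + t, ⟨u, rfl⟩, by rw [mulVec_add, mulVec_mulVec]⟩

section CNOT

variable (N : ℕ)

def cnotMatrix : Matrix (Fin (N + 2)) (Fin (N + 2)) (ZMod 2) :=
  1 + Matrix.single 1 0 1

theorem Lmap_eq_mulVec : Lmap N = (cnotMatrix N).mulVec := by
  funext x i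
  by_cases hi : i = 1
  · subst hi
    simp [Lmap, cnotMatrix, add_mulVec, single_mulVec, add_comm]
  · simp [Lmap, cnotMatrix, add_mulVec, single_mulVec, hi]

theorem Lmap_involutive : Function.Involutive (Lmap N) := by
  intro x
  funext i
  by_cases hi : i = 1
  · subst hi
    simp only [Lmap, Function.update_self, Function.update_of_ne (zero_ne_one' (Fin (N + 2)))]
    rw [← add_assoc, CharTwo.add_self_eq_zero, zero_add]
  · simp [Lmap, Function.update_of_ne hi]

theorem CNOTgate_mulVec (ψ : (Fin (N + 2) → ZMod 2) → ℂ) :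
    (CNOTgate N).mulVec ψ = ψ ∘ Lmap N := by
  funext y
  simp only [mulVec, dotProduct, CNOTgate, of_apply, ite_mul, one_mul, zero_mul,
    eq_comm (a := y), (Lmap_involutive N).eq_iff, Finset.sum_ite_eq', Finset.mem_univ,
    if_true, Function.comp_apply]

end CNOT

/-- Applying CNOT on qubits 1 (control) and 2 (target) to
`|ψ⟩ ∝ Σ_{x∈A} i^{l(x)} (-1)^{q(x)} |x⟩` with `A = {Ru + t}` affine yields a state
of the same form with `A' = L(A)` (again affine), `l' = l ∘ L⁻¹` (linear) and
`q' = q ∘ L⁻¹` (quadratic); over `Z_2`, `L⁻¹ = L`. -/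
theorem cnot_preserves_form (N m : ℕ)
    (R : Matrix (Fin (N + 2)) (Fin m) (ZMod 2)) (t : Fin (N + 2) → ZMod 2)
    (A : Set (Fin (N + 2) → ZMod 2))
    (hA : A = {x | ∃ u, x = R.mulVec u + t})
    (l q : (Fin (N + 2) → ZMod 2) → ZMod 2)
    (hl : IsLinear l) (hq : IsQuadratic q)
    (ψ : (Fin (N + 2) → ZMod 2) → ℂ)
    (hψ : ψ = A.indicator fun x => Complex.I ^ (l x).val * (-1 : ℂ) ^ (q x).val) :
    (∃ (m' : ℕ) (R' : Matrix (Fin (N + 2)) (Fin m') (ZMod 2))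
        (t' : Fin (N + 2) → ZMod 2),
        Lmap N '' A = {x | ∃ u, x = R'.mulVec u + t'}) ∧
    IsLinear (l ∘ Lmap N) ∧ IsQuadratic (q ∘ Lmap N) ∧
    ∃ c : ℂ, c ≠ 0 ∧
      (CNOTgate N).mulVec ψ =
        c • (Lmap N '' A).indicator
          (fun x => Complex.I ^ (l (Lmap N x)).val * (-1 : ℂ) ^ (q (Lmap N x)).val) := by
  refine ⟨⟨m, cnotMatrix N * R, cnotMatrix N *ᵥ t, ?_⟩, ?_, ?_, 1, one_ne_zero, ?_⟩
  · rw [hA, Lmap_eq_mulVec]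
    exact image_mulVec_affineSubspace _ _ _
  · rw [Lmap_eq_mulVec]
    exact hl.comp_mulVec _
  · rw [Lmap_eq_mulVec]
    exact hq.comp_mulVec _
  · rw [one_smul, CNOTgate_mulVec, hψ, (Lmap_involutive N).image_eq_preimage_symm]
    funext y
    exact (Set.indicator_comp_right (Lmap N)).symm
end
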